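/- arXiv:1403.3855 — 2 statements merged into one kernel-verified Lean document; each statement's English description precedes it below -/
import Mathlib

section
/- Let V be a finite set and ρ a coupling between probability measures μ₁ and μ₂ on V. Suppose there exist, for each pair x ≠ y, finitely many directed paths γⁱ_{(x,y)} from x to y (with vertices in V, otherwise unconstrained) and nonnegative weights ρⁱ(x,y) with ∑_i ρⁱ(x,y) = ρ(x,y), such that the flow Q = ∑_{x≠y} ∑_i ρⁱ(x,y) Q_{γⁱ_{(x,y)}} is acyclic. Then the elementary flow ∑_{x≠y} ρ(x,y) Q_{(x,y)} (on the complete digraph on V) is itself acyclic. -/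
open scoped BigOperators

variable {V : Type*}

/-- A directed path in the digraph `(V, E)`: a nonempty list of vertices whose
consecutive pairs are directed edges. -/
def IsDipath (E : Set (V × V)) (l : List V) : Prop :=
  l ≠ [] ∧ l.Chain' (fun a b => (a, b) ∈ E)

/-- The list of directed edges of a path. -/
def pathEdges (l : List V) : List (V × V) := l.zip l.tail

/-- The unit flow `Q_γ` along a path: `1` on the edges of the path and `0` elsewhere. -/
noncomputable def pathFlow (l : List V) : V × V → ℝ :=
  Set.indicator {e | e ∈ pathEdges l} 1

/-- A flow on the digraph `(V, E)`: nonnegative and supported on `E`. -/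
def IsFlow (E : Set (V × V)) (Q : V × V → ℝ) : Prop :=
  (∀ e, 0 ≤ Q e) ∧ ∀ e, e ∉ E → Q e = 0

/-- The divergence of a flow at a vertex. -/
noncomputable def divergence (Q : V × V → ℝ) (x : V) : ℝ :=
  (∑' y, Q (x, y)) - ∑' y, Q (y, x)

/-- A relation is acyclic if it has no directed cycles. -/
def AcyclicRel (r : V → V → Prop) : Prop := ∀ x, ¬ Relation.TransGen r x x

/-- The edge relation of a digraph. -/
def edgeRel (E : Set (V × V)) : V → V → Prop := fun a b => (a, b) ∈ E

/-- The partial order induced by an acyclic digraph: `x ≤ y` iff `x = y` or there is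
a directed path from `x` to `y`. -/
def inducedLE (E : Set (V × V)) : V → V → Prop :=
  Relation.ReflTransGen (edgeRel E)

/-- A finitely decomposable flow: a pointwise sum `∑ₙ qₙ Q_{γₙ}` over finite
self-avoiding directed paths with summable nonnegative weights. -/
def FinDecomposable (E : Set (V × V)) (Q : V × V → ℝ) : Prop :=
  ∃ (γ : ℕ → List V) (q : ℕ → ℝ),
    (∀ n, IsDipath E (γ n)) ∧ (∀ n, (γ n).Nodup) ∧ (∀ n, 0 ≤ q n) ∧ Summable q ∧
    ∀ e, Q e = ∑' n, q n * pathFlow (γ n) e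

/-- A probability measure on a countable set, as a nonnegative function of total sum `1`. -/
def IsProb (μ : V → ℝ) : Prop := (∀ x, 0 ≤ μ x) ∧ HasSum μ 1

/-- A coupling of `μ₁` and `μ₂`: a probability on `V × V` with the given marginals. -/
def IsCoupling (μ₁ μ₂ : V → ℝ) (ρ : V × V → ℝ) : Prop :=
  (∀ p, 0 ≤ ρ p) ∧ (∀ x, HasSum (fun y => ρ (x, y)) (μ₁ x)) ∧
    ∀ y, HasSum (fun x => ρ (x, y)) (μ₂ y)

/-- Stochastic domination: `∑ f μ₁ ≤ ∑ f μ₂` for every bounded increasing `f`. -/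
def StochDom (le : V → V → Prop) (μ₁ μ₂ : V → ℝ) : Prop :=
  ∀ f : V → ℝ, (∃ C, ∀ x, |f x| ≤ C) → (∀ x y, le x y → f x ≤ f y) →
    ∑' x, f x * μ₁ x ≤ ∑' x, f x * μ₂ x

/-- Finite-case divergence. -/
noncomputable def divergenceF [Fintype V] (Q : V × V → ℝ) (x : V) : ℝ :=
  (∑ y, Q (x, y)) - ∑ y, Q (y, x)

/-- Probability measure on a finite set. -/
def IsProbF [Fintype V] (μ : V → ℝ) : Prop := (∀ x, 0 ≤ μ x) ∧ ∑ x, μ x = 1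

/-- Coupling on a finite set. -/
def IsCouplingF [Fintype V] (μ₁ μ₂ : V → ℝ) (ρ : V × V → ℝ) : Prop :=
  (∀ p, 0 ≤ ρ p) ∧ (∀ x, ∑ y, ρ (x, y) = μ₁ x) ∧ ∀ y, ∑ x, ρ (x, y) = μ₂ y

/-- Stochastic domination on a finite set. -/
def StochDomF [Fintype V] (le : V → V → Prop) (μ₁ μ₂ : V → ℝ) : Prop :=
  ∀ f : V → ℝ, (∀ x y, le x y → f x ≤ f y) → ∑ x, f x * μ₁ x ≤ ∑ x, f x * μ₂ x

/-- The cost of a path: the sum of the weights of its edges. -/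
noncomputable def pathCost (w : V × V → ℝ) (l : List V) : ℝ := ((pathEdges l).map w).sum

/-- The geodesic cost associated to a weight function on a digraph. -/
noncomputable def geoCost (E : Set (V × V)) (w : V × V → ℝ) (x y : V) : ℝ :=
  sInf {r | ∃ l, IsDipath E l ∧ l.head? = some x ∧ l.getLast? = some y ∧ pathCost w l = r}

/-!
A pair `(a, b)` charged by `ρ` is carried by some path `γⁱ_{(a,b)}` of positive weight, and every
edge of that path carries positive `Q`-flow; so each edge of the elementary flow is a directed
path in `E(Q)`, and a cycle of the elementary flow would give one of `Q`.
-/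

theorem pathEdges_cons_cons (x y : V) (l : List V) :
    pathEdges (x :: y :: l) = (x, y) :: pathEdges (y :: l) := rfl

theorem isChain_of_forall_mem_pathEdges {S : V → V → Prop} :
    ∀ {l : List V}, (∀ x y, (x, y) ∈ pathEdges l → S x y) → l.IsChain S
  | [], _ => .nil
  | [_], _ => .singleton _
  | x :: y :: l, h => by
    simp only [pathEdges_cons_cons, List.mem_cons, Prod.mk.injEq] at h
    exact .cons_cons (h x y (.inl ⟨rfl, rfl⟩))
      (isChain_of_forall_mem_pathEdges fun u v huv => h u v (.inr huv))

theorem transGen_of_forall_mem_pathEdges {S : V → V → Prop} {l : List V} {a b : V}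
    (hab : a ≠ b) (ha : l.head? = some a) (hb : l.getLast? = some b)
    (hS : ∀ x y, (x, y) ∈ pathEdges l → S x y) : Relation.TransGen S a b := by
  have hl : l ≠ [] := by rintro rfl; simp at ha
  have hreach :=
    List.relationReflTransGen_of_exists_isChain l (isChain_of_forall_mem_pathEdges hS) hl
  rw [(List.head_eq_iff_head?_eq_some hl).2 ha, (List.getLast_eq_iff_getLast?_eq_some hl).2 hb]
    at hreach
  exact (Relation.reflTransGen_iff_eq_or_transGen.1 hreach).resolve_left hab.symm

theorem AcyclicRel.of_le_transGen {r s : V → V → Prop} (hs : AcyclicRel s)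
    (h : ∀ a b, r a b → Relation.TransGen s a b) : AcyclicRel r :=
  fun x hx => hs x (Relation.TransGen.lift' id h x x hx)

theorem pathFlow_nonneg (l : List V) (e : V × V) : 0 ≤ pathFlow l e :=
  Set.indicator_nonneg (fun _ _ => zero_le_one) e

theorem pathFlow_of_mem {l : List V} {e : V × V} (he : e ∈ pathEdges l) : pathFlow l e = 1 :=
  Set.indicator_of_mem (s := {e | e ∈ pathEdges l}) he 1

section WeightedPaths

variable {ι : Type*} {s : Finset ι} {w : ι → ℝ}

theorem sum_mul_pathFlow_nonneg (c : ι → List V) (hw : ∀ i ∈ s, 0 ≤ w i) (e : V × V) :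
    0 ≤ ∑ i ∈ s, w i * pathFlow (c i) e :=
  Finset.sum_nonneg fun i hi => mul_nonneg (hw i hi) (pathFlow_nonneg _ _)

theorem sum_mul_pathFlow_pos (c : ι → List V) (hw : ∀ i ∈ s, 0 ≤ w i) {i : ι} (hi : i ∈ s)
    (hwi : 0 < w i) {e : V × V} (he : e ∈ pathEdges (c i)) :
    0 < ∑ i ∈ s, w i * pathFlow (c i) e :=
  Finset.sum_pos' (fun j hj => mul_nonneg (hw j hj) (pathFlow_nonneg _ _))
    ⟨i, hi, by rw [pathFlow_of_mem he, mul_one]; exact hwi⟩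

end WeightedPaths

theorem economic_coupling_elementary_acyclic_general {V : Type*} [Fintype V] [DecidableEq V]
    (ρ : V × V → ℝ)
    (k : V × V → ℕ) (γ : V × V → ℕ → List V) (r : V × V → ℕ → ℝ)
    (hpaths : ∀ p : V × V, p.1 ≠ p.2 → ∀ i < k p,
      IsDipath {e : V × V | e.1 ≠ e.2} (γ p i) ∧
      (γ p i).head? = some p.1 ∧ (γ p i).getLast? = some p.2 ∧ 0 ≤ r p i)
    (hweights : ∀ p : V × V, p.1 ≠ p.2 → ∑ i ∈ Finset.range (k p), r p i = ρ p)
    (hacyc : AcyclicRel fun a b => 0 <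
      ∑ p : V × V, if p.1 = p.2 then 0 else
        ∑ i ∈ Finset.range (k p), r p i * pathFlow (γ p i) (a, b)) :
    AcyclicRel fun a b => a ≠ b ∧ 0 < ρ (a, b) := by
  refine hacyc.of_le_transGen fun a b ⟨hab, hρab⟩ => ?_
  have hr : ∀ p : V × V, p.1 ≠ p.2 → ∀ i ∈ Finset.range (k p), 0 ≤ r p i :=
    fun p hp i hi => (hpaths p hp i (Finset.mem_range.1 hi)).2.2.2
  obtain ⟨i, hi, hri⟩ : ∃ i ∈ Finset.range (k (a, b)), (0 : ℝ) < r (a, b) i :=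
    Finset.exists_lt_of_sum_lt (by simpa [hweights (a, b) hab] using hρab)
  obtain ⟨-, hhead, hlast, -⟩ := hpaths (a, b) hab i (Finset.mem_range.1 hi)
  refine transGen_of_forall_mem_pathEdges hab hhead hlast fun x y hxy => ?_
  refine Finset.sum_pos' (fun p _ => ?_) ⟨(a, b), Finset.mem_univ _, ?_⟩
  · split_ifs with hp
    exacts [le_rfl, sum_mul_pathFlow_nonneg _ (hr p hp) _]
  · rw [if_neg hab]
    exact sum_mul_pathFlow_pos _ (hr _ hab) hi hri hxy

/-- **Economic couplings are detected by the elementary flow.**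
If some choice of paths and weights representing the coupling `ρ` yields an acyclic flow,
then the elementary flow `∑_{x ≠ y} ρ(x,y) Q_{(x,y)}` is itself acyclic. -/
theorem economic_coupling_elementary_acyclic {V : Type*} [Fintype V] [DecidableEq V]
    (μ₁ μ₂ : V → ℝ) (h₁ : IsProbF μ₁) (h₂ : IsProbF μ₂)
    (ρ : V × V → ℝ) (hρ : IsCouplingF μ₁ μ₂ ρ)
    (k : V × V → ℕ) (γ : V × V → ℕ → List V) (r : V × V → ℕ → ℝ)
    (hpaths : ∀ p : V × V, p.1 ≠ p.2 → ∀ i < k p,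
      IsDipath {e : V × V | e.1 ≠ e.2} (γ p i) ∧
      (γ p i).head? = some p.1 ∧ (γ p i).getLast? = some p.2 ∧ 0 ≤ r p i)
    (hweights : ∀ p : V × V, p.1 ≠ p.2 → ∑ i ∈ Finset.range (k p), r p i = ρ p)
    (hacyc : AcyclicRel fun a b => 0 <
      ∑ p : V × V, if p.1 = p.2 then 0 else
        ∑ i ∈ Finset.range (k p), r p i * pathFlow (γ p i) (a, b)) :
    AcyclicRel fun a b => a ≠ b ∧ 0 < ρ (a, b) :=
  economic_coupling_elementary_acyclic_general ρ k γ r hpaths hweights hacyc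
end

section
/- Let V be a finite set and ρ a coupling between probability measures μ₁ and μ₂ on V such that the elementary flow ∑_{x≠y} ρ(x,y) Q_{(x,y)} is not acyclic. Then there exists another coupling ρ̃ between μ₁ and μ₂ such that ρ̃(x,y) ≤ ρ(x,y) for all x ≠ y, with strict inequality for at least one pair (x,y). -/
open scoped BigOperators

variable {V : Type*}

/-! A directed cycle through positive off-diagonal entries of `ρ` carries a nonzero circulation
`c` (each edge weighted by how often the cycle uses it). Subtracting `ε c` from `ρ` and adding to
each diagonal entry `(a, a)` the mass `ε c` sends out of `a` preserves both marginals, because a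
circulation leaves every vertex with as much mass as enters it. For small `ε > 0` the result is
still nonnegative, and it is strictly smaller than `ρ` on the edges of the cycle. -/

open Filter Topology

lemma IsFlow.mono {E F : Set (V × V)} {c : V × V → ℝ} (hc : IsFlow E c) (hEF : E ⊆ F) :
    IsFlow F c :=
  ⟨hc.1, fun e he => hc.2 e fun h => he (hEF h)⟩

lemma IsFlow.mem_of_pos {E : Set (V × V)} {c : V × V → ℝ} (hc : IsFlow E c) {e : V × V}
    (he : 0 < c e) : e ∈ E := by
  by_contra h
  exact he.ne' (hc.2 e h)

lemma IsFlow.add {E : Set (V × V)} {c d : V × V → ℝ} (hc : IsFlow E c) (hd : IsFlow E d) :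
    IsFlow E (c + d) :=
  ⟨fun e => add_nonneg (hc.1 e) (hd.1 e), fun e he => by simp [hc.2 e he, hd.2 e he]⟩

lemma isFlow_single [DecidableEq V] {E : Set (V × V)} {e : V × V} (he : e ∈ E) :
    IsFlow E (Pi.single e 1) :=
  ⟨(Pi.single_nonneg.2 zero_le_one : (0 : V × V → ℝ) ≤ Pi.single e 1),
    fun _ he' => Pi.single_eq_of_ne (ne_of_mem_of_not_mem he he').symm _⟩

section Divergence

variable [Fintype V]

lemma divergenceF_add (c d : V × V → ℝ) (a : V) :
    divergenceF (c + d) a = divergenceF c a + divergenceF d a := by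
  simp only [divergenceF, Pi.add_apply, Finset.sum_add_distrib]
  ring

lemma divergenceF_single [DecidableEq V] (x y a : V) :
    divergenceF (Pi.single (x, y) 1) a = (Pi.single x 1 - Pi.single y 1 : V → ℝ) a := by
  simp [divergenceF, Pi.single_apply, Prod.ext_iff, ite_and]

lemma exists_isFlow_divergenceF_of_transGen [DecidableEq V] {r : V → V → Prop} {x y : V}
    (h : Relation.TransGen r x y) :
    ∃ c : V × V → ℝ, IsFlow {e | r e.1 e.2} c ∧ (∃ e, 0 < c e) ∧
      ∀ a, divergenceF c a = (Pi.single x 1 - Pi.single y 1 : V → ℝ) a := by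
  induction h using Relation.TransGen.head_induction_on with
  | @single x hxy =>
    exact ⟨Pi.single (x, y) 1, isFlow_single hxy, ⟨(x, y), by simp⟩, divergenceF_single x y⟩
  | @head x v hxv _ ih =>
    obtain ⟨c, hc, ⟨e, he⟩, hdiv⟩ := ih
    have hstep : IsFlow {e | r e.1 e.2} (Pi.single (x, v) 1) := isFlow_single hxv
    refine ⟨Pi.single (x, v) 1 + c, hstep.add hc, ⟨e, add_pos_of_nonneg_of_pos (hstep.1 e) he⟩,
      fun a => ?_⟩
    rw [divergenceF_add, divergenceF_single, hdiv]
    simp only [Pi.sub_apply, sub_add_sub_cancel]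

end Divergence

lemma exists_pos_forall_mul_le {ι : Type*} [Finite ι] {c ρ : ι → ℝ} (hρ : ∀ i, 0 ≤ ρ i)
    (hcρ : ∀ i, 0 < c i → 0 < ρ i) : ∃ ε > 0, ∀ i, ε * c i ≤ ρ i := by
  have h : ∀ i, ∀ᶠ ε in 𝓝[>] (0 : ℝ), ε * c i ≤ ρ i := by
    intro i
    rcases le_or_gt (c i) 0 with hc | hc
    · filter_upwards [self_mem_nhdsWithin] with ε (hε : 0 < ε)
      exact (mul_nonpos_of_nonneg_of_nonpos hε.le hc).trans (hρ i)
    · have hlim : Tendsto (fun ε => ε * c i) (𝓝[>] 0) (𝓝 0) := by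
        simpa using ((continuous_mul_const (c i)).tendsto 0).mono_left nhdsWithin_le_nhds
      exact hlim.eventually (eventually_le_nhds (hcρ i hc))
  obtain ⟨ε, hε, hle⟩ := ((eventually_all.2 h).and self_mem_nhdsWithin).exists
  exact ⟨ε, hle, hε⟩

section Coupling

variable [Fintype V] [DecidableEq V]

noncomputable def moveToDiagonal (ρ c : V × V → ℝ) (ε : ℝ) (p : V × V) : ℝ :=
  ρ p - ε * c p + if p.1 = p.2 then ε * ∑ y, c (p.1, y) else 0

lemma moveToDiagonal_of_ne (ρ c : V × V → ℝ) (ε : ℝ) {p : V × V} (hp : p.1 ≠ p.2) :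
    moveToDiagonal ρ c ε p = ρ p - ε * c p := by
  simp [moveToDiagonal, hp]

lemma IsCouplingF.moveToDiagonal {μ₁ μ₂ : V → ℝ} {ρ c : V × V → ℝ} (hρ : IsCouplingF μ₁ μ₂ ρ)
    (hc : IsFlow {p | p.1 ≠ p.2} c) (hdiv : ∀ a, divergenceF c a = 0) {ε : ℝ} (hε : 0 ≤ ε)
    (hle : ∀ p, ε * c p ≤ ρ p) : IsCouplingF μ₁ μ₂ (moveToDiagonal ρ c ε) := by
  refine ⟨fun p => ?_, fun a => ?_, fun b => ?_⟩
  · by_cases hp : p.1 = p.2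
    · have hcp : c p = 0 := hc.2 p fun h => h hp
      simp only [_root_.moveToDiagonal, hp, if_true, hcp, mul_zero, sub_zero]
      exact add_nonneg (hρ.1 p) (mul_nonneg hε (Finset.sum_nonneg fun y _ => hc.1 _))
    · rw [moveToDiagonal_of_ne _ _ _ hp]
      linarith [hle p]
  · simp only [_root_.moveToDiagonal, Finset.sum_add_distrib, Finset.sum_sub_distrib,
      ← Finset.mul_sum, Finset.sum_ite_eq, Finset.mem_univ, if_true, hρ.2.1 a]
    ring
  · have hbal : ∑ y, c (b, y) = ∑ x, c (x, b) := sub_eq_zero.1 (hdiv b)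
    simp only [_root_.moveToDiagonal, Finset.sum_add_distrib, Finset.sum_sub_distrib,
      ← Finset.mul_sum, Finset.sum_ite_eq', Finset.mem_univ, if_true, hρ.2.2 b, hbal]
    ring

end Coupling

theorem non_acyclic_coupling_improvable_general {V : Type*} [Fintype V]
    (μ₁ μ₂ : V → ℝ)
    (ρ : V × V → ℝ) (hρ : IsCouplingF μ₁ μ₂ ρ)
    (hnotacyc : ¬ AcyclicRel fun a b => a ≠ b ∧ 0 < ρ (a, b)) :
    ∃ ρ' : V × V → ℝ, IsCouplingF μ₁ μ₂ ρ' ∧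
      (∀ p : V × V, p.1 ≠ p.2 → ρ' p ≤ ρ p) ∧
      ∃ p : V × V, p.1 ≠ p.2 ∧ ρ' p < ρ p := by
  classical
  obtain ⟨x, hcycle⟩ : ∃ x, Relation.TransGen (fun a b => a ≠ b ∧ 0 < ρ (a, b)) x x := by
    simpa [AcyclicRel] using hnotacyc
  obtain ⟨c, hc, ⟨e, he⟩, hdiv⟩ := exists_isFlow_divergenceF_of_transGen hcycle
  have hcirc : ∀ a, divergenceF c a = 0 := fun a => by simp [hdiv]
  obtain ⟨ε, hε, hle⟩ := exists_pos_forall_mul_le hρ.1 fun p hp => (hc.mem_of_pos hp).2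
  have he_off : e.1 ≠ e.2 := (hc.mem_of_pos he).1
  refine ⟨moveToDiagonal ρ c ε, hρ.moveToDiagonal (hc.mono fun p hp => hp.1) hcirc hε.le hle,
    fun p hp => ?_, e, he_off, ?_⟩
  · rw [moveToDiagonal_of_ne _ _ _ hp]
    exact sub_le_self _ (mul_nonneg hε.le (hc.1 p))
  · rw [moveToDiagonal_of_ne _ _ _ he_off]
    exact sub_lt_self _ (mul_pos hε he)

/-- **Non-economic couplings can be improved.**
If the elementary flow of the coupling `ρ` is not acyclic, there is another coupling `ρ̃`
of the same marginals with `ρ̃ ≤ ρ` off the diagonal and a strict inequality somewhere. -/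
theorem non_acyclic_coupling_improvable {V : Type*} [Fintype V]
    (μ₁ μ₂ : V → ℝ) (h₁ : IsProbF μ₁) (h₂ : IsProbF μ₂)
    (ρ : V × V → ℝ) (hρ : IsCouplingF μ₁ μ₂ ρ)
    (hnotacyc : ¬ AcyclicRel fun a b => a ≠ b ∧ 0 < ρ (a, b)) :
    ∃ ρ' : V × V → ℝ, IsCouplingF μ₁ μ₂ ρ' ∧
      (∀ p : V × V, p.1 ≠ p.2 → ρ' p ≤ ρ p) ∧
      ∃ p : V × V, p.1 ≠ p.2 ∧ ρ' p < ρ p :=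
  non_acyclic_coupling_improvable_general μ₁ μ₂ ρ hρ hnotacyc
end
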